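/- Let 1 < p < 2 and let Z₁,…,Zₙ be independent random variables with |Zᵢ| ≤ bᵢ almost surely, where b = (b₁,…,bₙ) ∈ ℝⁿ is a vector of nonnegative bounds. Set aᵢ = E Zᵢ and a = (1/n)∑ᵢ aᵢ. Then for every ε > 0, P(|(1/n)∑ᵢ₌₁ⁿ Zᵢ − a| > ε) ≤ 2·exp(−(1/2)·(n·ε / (3‖b‖_p))^{p/(p−1)}), where ‖b‖_p = (∑ᵢ bᵢ^p)^{1/p}. -/

import Mathlib

/-!
Instead of the `k` largest bounds, split the indices at a threshold `θ`. The head `{bᵢ > θ}` is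
bounded deterministically: `∑_{bᵢ > θ} bᵢ ≤ θ^{1-p} ‖b‖_p^p`. By Hoeffding's lemma the centred
tail sum is sub-Gaussian with variance proxy `∑_{bᵢ ≤ θ} bᵢ² ≤ θ^{2-p} ‖b‖_p^p`. Choosing `θ` so
that the head absorbs `2/3` of the deviation `nε` leaves `nε/3` to the tail, and Hoeffding's
inequality then yields exactly the exponent `(nε / (3‖b‖_p))^{p/(p-1)} / 2`.
-/

open MeasureTheory ProbabilityTheory Finset Real
open scoped NNReal

section SplitAtThreshold

variable {ι : Type*} {s : Finset ι} {b : ι → ℝ} {θ p : ℝ}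

theorem sum_filter_lt_le_rpow_mul_sum_rpow (hb : ∀ i ∈ s, 0 ≤ b i) (hθ : 0 < θ) (hp : 1 ≤ p) :
    ∑ i ∈ s with θ < b i, b i ≤ θ ^ (1 - p) * ∑ i ∈ s, b i ^ p := by
  rw [mul_sum]
  calc ∑ i ∈ s with θ < b i, b i
      ≤ ∑ i ∈ s with θ < b i, θ ^ (1 - p) * b i ^ p := by
        refine sum_le_sum fun i hi => ?_
        have hθb := (mem_filter.1 hi).2
        have hbi : 0 < b i := hθ.trans hθb
        calc b i = b i ^ (1 - p) * b i ^ p := by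
              rw [← rpow_add hbi, sub_add_cancel, rpow_one]
          _ ≤ θ ^ (1 - p) * b i ^ p :=
              mul_le_mul_of_nonneg_right
                (rpow_le_rpow_of_nonpos hθ hθb.le (by linarith)) (rpow_nonneg hbi.le _)
    _ ≤ ∑ i ∈ s, θ ^ (1 - p) * b i ^ p :=
        sum_le_sum_of_subset_of_nonneg (filter_subset _ _) fun i hi _ =>
          mul_nonneg (rpow_nonneg hθ.le _) (rpow_nonneg (hb i hi) _)

theorem sum_filter_le_sq_le_rpow_mul_sum_rpow (hb : ∀ i ∈ s, 0 ≤ b i) (hθ : 0 ≤ θ) (hp : p ≤ 2) :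
    ∑ i ∈ s with b i ≤ θ, b i ^ 2 ≤ θ ^ (2 - p) * ∑ i ∈ s, b i ^ p := by
  rw [mul_sum]
  calc ∑ i ∈ s with b i ≤ θ, b i ^ 2
      ≤ ∑ i ∈ s with b i ≤ θ, θ ^ (2 - p) * b i ^ p := by
        refine sum_le_sum fun i hi => ?_
        obtain ⟨his, hbθ⟩ := mem_filter.1 hi
        rcases (hb i his).eq_or_lt with hbi | hbi
        · rw [← hbi, sq, zero_mul]
          exact mul_nonneg (rpow_nonneg hθ _) (rpow_nonneg le_rfl _)
        calc b i ^ 2 = b i ^ (2 - p) * b i ^ p := by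
              rw [← rpow_add hbi, sub_add_cancel, rpow_two]
          _ ≤ θ ^ (2 - p) * b i ^ p :=
              mul_le_mul_of_nonneg_right
                (rpow_le_rpow hbi.le hbθ (by linarith)) (rpow_nonneg hbi.le _)
    _ ≤ ∑ i ∈ s, θ ^ (2 - p) * b i ^ p :=
        sum_le_sum_of_subset_of_nonneg (filter_subset _ _) fun i hi _ =>
          mul_nonneg (rpow_nonneg hθ _) (rpow_nonneg (hb i hi) _)

end SplitAtThreshold

namespace ProbabilityTheory

variable {Ω : Type*} {m : MeasurableSpace Ω} {μ : Measure Ω} {X : Ω → ℝ}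

theorem HasSubgaussianMGF.mono {c c' : ℝ≥0} (h : HasSubgaussianMGF X c μ) (hc : c ≤ c') :
    HasSubgaussianMGF X c' μ where
  integrable_exp_mul := h.integrable_exp_mul
  mgf_le t := (h.mgf_le t).trans (exp_le_exp.2 (by gcongr))

theorem HasSubgaussianMGF.measure_abs_ge_le {c : ℝ≥0} (h : HasSubgaussianMGF X c μ) {ε : ℝ}
    (hε : 0 ≤ ε) : μ.real {ω | ε ≤ |X ω|} ≤ 2 * exp (-ε ^ 2 / (2 * c)) := by
  have hsplit : {ω | ε ≤ |X ω|} = {ω | ε ≤ X ω} ∪ {ω | ε ≤ (-X) ω} := by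
    ext ω
    simp only [Set.mem_ofPred_eq, Set.mem_union, Pi.neg_apply, le_abs', le_neg]
    tauto
  calc μ.real {ω | ε ≤ |X ω|} ≤ μ.real {ω | ε ≤ X ω} + μ.real {ω | ε ≤ (-X) ω} :=
        hsplit ▸ measureReal_union_le _ _
    _ ≤ 2 * exp (-ε ^ 2 / (2 * c)) := by
        linarith [h.measure_ge_le hε, h.neg.measure_ge_le hε]

variable [IsProbabilityMeasure μ] {c : ℝ}

theorem hasSubgaussianMGF_sub_integral_of_abs_le (hX : AEMeasurable X μ)
    (h : ∀ᵐ ω ∂μ, |X ω| ≤ c) : HasSubgaussianMGF (fun ω ↦ X ω - μ[X]) (‖c‖₊ ^ 2) μ := by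
  convert hasSubgaussianMGF_of_mem_Icc hX (h.mono fun ω hω ↦ abs_le.1 hω) using 2
  rw [sub_neg_eq_add, ← two_mul, nnnorm_mul, nnnorm_two, mul_div_cancel_left₀ _ two_ne_zero]

theorem ae_abs_sub_integral_le (h : ∀ᵐ ω ∂μ, |X ω| ≤ c) :
    ∀ᵐ ω ∂μ, |X ω - μ[X]| ≤ 2 * c := by
  have hmean : |μ[X]| ≤ c := by
    simpa using norm_integral_le_of_norm_le_const (μ := μ) (f := X) h
  filter_upwards [h] with ω hω
  linarith [abs_sub (X ω) (μ[X])]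

theorem measureReal_lt_abs_sum_sub_integral_le_of_sum_compl_le {ι : Type*} [Fintype ι]
    [DecidableEq ι] {Z : ι → Ω → ℝ} {b : ι → ℝ} (hZ : ∀ i, AEMeasurable (Z i) μ)
    (hindep : iIndepFun Z μ) (hbound : ∀ i, ∀ᵐ ω ∂μ, |Z i ω| ≤ b i) (T : Finset ι) {t V : ℝ}
    (ht : 0 ≤ t) (hhead : ∑ i ∈ Tᶜ, b i ≤ t) (htail : ∑ i ∈ T, b i ^ 2 ≤ V) :
    μ.real {ω | 3 * t < |∑ i, (Z i ω - μ[Z i])|} ≤ 2 * exp (-t ^ 2 / (2 * V)) := by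
  set Y : ι → Ω → ℝ := fun i ω ↦ Z i ω - μ[Z i]
  have hV : 0 ≤ V := (sum_nonneg fun i _ ↦ sq_nonneg (b i)).trans htail
  have hY : iIndepFun Y μ :=
    hindep.comp (fun i (x : ℝ) ↦ x - ∫ ω, Z i ω ∂μ) fun i ↦ measurable_id.sub_const _
  have htail_subG : HasSubgaussianMGF (fun ω ↦ ∑ i ∈ T, Y i ω) V.toNNReal μ := by
    refine (HasSubgaussianMGF.sum_of_iIndepFun hY fun i _ ↦
      hasSubgaussianMGF_sub_integral_of_abs_le (hZ i) (hbound i)).mono ?_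
    rw [← NNReal.coe_le_coe, NNReal.coe_sum, Real.coe_toNNReal _ hV]
    simpa [sq_abs] using htail
  have hhead_ae : ∀ᵐ ω ∂μ, |∑ i ∈ Tᶜ, Y i ω| ≤ 2 * t := by
    filter_upwards [ae_all_iff.2 fun i ↦ ae_abs_sub_integral_le (hbound i)] with ω hω
    calc |∑ i ∈ Tᶜ, Y i ω| ≤ ∑ i ∈ Tᶜ, 2 * b i :=
          (abs_sum_le_sum_abs _ _).trans (sum_le_sum fun i _ ↦ hω i)
      _ ≤ 2 * t := by rw [← mul_sum]; linarith
  have hevent : {ω | 3 * t < |∑ i, Y i ω|} ≤ᵐ[μ] {ω | t ≤ |∑ i ∈ T, Y i ω|} := by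
    filter_upwards [hhead_ae] with ω hω (hlt : 3 * t < |∑ i, Y i ω|)
    rw [← sum_add_sum_compl T] at hlt
    have := abs_add_le (∑ i ∈ T, Y i ω) (∑ i ∈ Tᶜ, Y i ω)
    change t ≤ |∑ i ∈ T, Y i ω|
    linarith
  calc μ.real {ω | 3 * t < |∑ i, Y i ω|} ≤ μ.real {ω | t ≤ |∑ i ∈ T, Y i ω|} :=
        ENNReal.toReal_mono (measure_ne_top _ _) (measure_mono_ae hevent)
    _ ≤ 2 * exp (-t ^ 2 / (2 * V)) := by
        simpa [Real.coe_toNNReal _ hV] using htail_subG.measure_abs_ge_le ht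

theorem measureReal_lt_abs_sum_sub_integral_le_rpow {ι : Type*} [Fintype ι] {Z : ι → Ω → ℝ}
    {b : ι → ℝ} {p t : ℝ} (hp1 : 1 < p) (hp2 : p ≤ 2) (hb : ∀ i, 0 ≤ b i)
    (hZ : ∀ i, AEMeasurable (Z i) μ) (hindep : iIndepFun Z μ)
    (hbound : ∀ i, ∀ᵐ ω ∂μ, |Z i ω| ≤ b i) (ht : 0 ≤ t) :
    μ.real {ω | 3 * t < |∑ i, (Z i ω - μ[Z i])|} ≤
      2 * exp (-(1 / 2) * (t / (∑ i, b i ^ p) ^ (1 / p)) ^ (p / (p - 1))) := by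
  classical
  have hS : 0 ≤ ∑ i, b i ^ p := sum_nonneg fun i _ ↦ rpow_nonneg (hb i) p
  set B := (∑ i, b i ^ p) ^ (1 / p)
  rcases (div_nonneg ht (rpow_nonneg hS _) : 0 ≤ t / B).eq_or_lt with htB | htB
  · rw [← htB, zero_rpow (div_pos (by linarith) (by linarith)).ne', mul_zero, exp_zero]
    exact measureReal_le_one.trans (by norm_num)
  have hB : 0 < B := (div_pos_iff.1 htB).elim And.right fun h ↦ absurd h.1 ht.not_gt
  have hBp : B ^ p = ∑ i, b i ^ p := by
    rw [← rpow_mul hS, one_div_mul_cancel (by linarith), rpow_one]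
  obtain ⟨u, hu, rfl⟩ : ∃ u, 0 < u ∧ t = u * B := ⟨t / B, htB, (div_mul_cancel₀ t hB.ne').symm⟩
  rw [mul_div_cancel_right₀ u hB.ne']
  -- threshold `s * B` with `s ^ (1 - p) = u`, which makes the head sum at most `u * B = t`
  set s := u ^ (-(p - 1)⁻¹)
  have hθ : 0 < s * B := mul_pos (rpow_pos_of_pos hu _) hB
  have hscale (k : ℝ) : (s * B) ^ (k - p) * ∑ i, b i ^ p = s ^ (k - p) * B ^ k := by
    rw [← hBp, mul_rpow (rpow_pos_of_pos hu _).le hB.le, mul_assoc, ← rpow_add hB, sub_add_cancel]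
  have hs (k : ℝ) : s ^ (k - p) = u ^ (k - p / (p - 1) * (k - 1)) := by
    have : p - 1 ≠ 0 := by linarith
    rw [← rpow_mul hu.le]
    congr 1
    field_simp
    ring
  refine (measureReal_lt_abs_sum_sub_integral_le_of_sum_compl_le hZ hindep hbound
    {i | b i ≤ s * B} ht (V := u ^ (2 - p / (p - 1)) * B ^ 2) ?_ ?_).trans_eq ?_
  · rw [compl_filter]
    simp only [not_le]
    refine (sum_filter_lt_le_rpow_mul_sum_rpow (fun i _ ↦ hb i) hθ hp1.le).trans_eq ?_
    rw [hscale, hs]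
    norm_num
  · refine (sum_filter_le_sq_le_rpow_mul_sum_rpow (fun i _ ↦ hb i) hθ.le hp2).trans_eq ?_
    rw [hscale, hs]
    norm_num
  · congr 2
    rw [rpow_sub hu, rpow_two]
    field_simp

end ProbabilityTheory

/-- ℓ_p-norm Hoeffding-type inequality: for `1 < p < 2`, independent random
variables `Zᵢ` with `|Zᵢ| ≤ bᵢ` a.s., means `aᵢ = E Zᵢ`, `a = (1/n)∑ aᵢ`, and
`ε > 0`, `P(|(1/n)∑ Zᵢ − a| > ε) ≤ 2 exp(−(1/2)(nε/(3‖b‖_p))^{p/(p−1)})`. -/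
theorem stmt2 {Ω : Type*} [MeasureSpace Ω] [IsProbabilityMeasure (volume : Measure Ω)]
    (p : ℝ) (hp1 : 1 < p) (hp2 : p < 2) (n : ℕ) (hn : 0 < n)
    (Z : Fin n → Ω → ℝ) (b : Fin n → ℝ) (hb : ∀ i, 0 ≤ b i)
    (hZmeas : ∀ i, Measurable (Z i))
    (hindep : iIndepFun Z volume)
    (hbound : ∀ i, ∀ᵐ ω, |Z i ω| ≤ b i)
    (a : Fin n → ℝ) (ha : ∀ i, a i = ∫ ω, Z i ω)
    (ε : ℝ) (hε : 0 < ε) :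
    (volume {ω | |(1 / (n : ℝ)) * ∑ i, Z i ω - (1 / (n : ℝ)) * ∑ i, a i| > ε}).toReal ≤
      2 * Real.exp (-(1 / 2) *
        ((n : ℝ) * ε / (3 * (∑ i, b i ^ p) ^ (1 / p))) ^ (p / (p - 1))) := by
  have hn' : (0 : ℝ) < n := Nat.cast_pos.2 hn
  have hevent : {ω | |(1 / (n : ℝ)) * ∑ i, Z i ω - (1 / (n : ℝ)) * ∑ i, a i| > ε} =
      {ω | 3 * (n * ε / 3) < |∑ i, (Z i ω - ∫ ω', Z i ω')|} := by
    ext ω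
    simp only [Set.mem_ofPred_eq, ← ha, sum_sub_distrib, ← mul_sub, abs_mul, one_div, abs_inv,
      Nat.abs_cast, gt_iff_lt, lt_inv_mul_iff₀ hn']
    rw [mul_div_cancel₀ _ three_ne_zero]
  rw [hevent, ← div_div]
  exact measureReal_lt_abs_sum_sub_integral_le_rpow (t := n * ε / 3) hp1 hp2.le hb
    (fun i ↦ (hZmeas i).aemeasurable) hindep hbound (by positivity)
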